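/- Let P be a Hopf algebra, I a coideal right ideal of P, so that P/I is a coalgebra and right P-module, and view P as a right P/I-comodule via Δ_P := (id ⊗ π_I) ∘ Δ, where π_I : P → P/I is the canonical surjection. Let B := P^{co P/I} be the coaction-invariant subalgebra of the resulting homogeneous P/I-extension B ⊆ P. Then this extension is a coalgebra-Galois extension if and only if I = B⁺P, where B⁺ := B ∩ Ker ε. -/
import Mathlib


/-!
STATEMENT 3. Let P be a Hopf algebra and I a coideal right ideal of P, and view
P as a right P/I-comodule via (id ⊗ π_I) ∘ Δ.  With B := P^{co P/I}, the
homogeneous P/I-extension B ⊆ P is coalgebra-Galois iff I = B⁺P where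
B⁺ = B ∩ Ker ε.  (The quotient coalgebra P/I is modelled as a coalgebra C
together with a surjective coalgebra map π : P → C whose kernel I is a right
ideal of P.)
-/

open TensorProduct LinearMap

noncomputable section

namespace CGal

variable {k : Type*} [Field k]
variable {P : Type*} [Ring P] [HopfAlgebra k P]
variable {C : Type*} [AddCommGroup C] [Module k C] [Coalgebra k C]

/-- The coaction invariants `P^{coC}`. -/
def coinv (δ : P →ₗ[k] P ⊗[k] C) : Set P :=
  {b : P | ∀ p : P, δ (b * p) = b • δ p}

/-- The kernel of `P ⊗ P → P ⊗_B P` for `B = P^{coC}`. -/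
def galRel (δ : P →ₗ[k] P ⊗[k] C) : Submodule k (P ⊗[k] P) :=
  Submodule.span k
    {x | ∃ p b p', b ∈ coinv δ ∧ x = (p * b) ⊗ₜ[k] p' - p ⊗ₜ[k] (b * p')}

/-- The lifted canonical map `~can : P ⊗ P → P ⊗ C`, `p ⊗ p' ↦ p δ(p')`. -/
def canLift (δ : P →ₗ[k] P ⊗[k] C) : P ⊗[k] P →ₗ[k] P ⊗[k] C :=
  (TensorProduct.map (LinearMap.mul' k P) LinearMap.id)
    ∘ₗ (TensorProduct.assoc k P P C).symm.toLinearMap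
    ∘ₗ (lTensor P δ)

/-- The extension `P^{coC} ⊆ P` is coalgebra-Galois. -/
def IsCGalois (δ : P →ₗ[k] P ⊗[k] C) : Prop :=
  Function.Surjective (canLift δ) ∧ LinearMap.ker (canLift δ) = galRel δ

set_option linter.unusedSectionVars false
open Coalgebra

lemma canLift_tmul (δ : P →ₗ[k] P ⊗[k] C) (q y : P) :
    canLift δ (q ⊗ₜ[k] y) = rTensor C (LinearMap.mulLeft k q) (δ y) := by
  have h : ∀ t : P ⊗[k] C,
      (TensorProduct.map (LinearMap.mul' k P) LinearMap.id)
        ((TensorProduct.assoc k P P C).symm (q ⊗ₜ[k] t))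
        = rTensor C (LinearMap.mulLeft k q) t := by
    intro t
    induction t using TensorProduct.induction_on with
    | zero => simp
    | tmul a c => simp [LinearMap.mul'_apply]
    | add u v hu hv => simp [tmul_add, map_add, hu, hv]
  simp only [canLift, coe_comp, Function.comp_apply, lTensor_tmul, LinearEquiv.coe_coe]
  exact h (δ y)

variable (k P) in
/-- `Φ : p ⊗ p' ↦ p p'₍₁₎ ⊗ p'₍₂₎`. -/
def Phi : P ⊗[k] P →ₗ[k] P ⊗[k] P := canLift comul

variable (k P) in
/-- `Ψ : p ⊗ p' ↦ p S(p'₍₁₎) ⊗ p'₍₂₎`. -/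
def Psi : P ⊗[k] P →ₗ[k] P ⊗[k] P :=
  canLift ((HopfAlgebra.antipode (R := k) (A := P)).rTensor P ∘ₗ comul)

variable (k P) in
/-- `a ⊗ (u ⊗ v) ↦ S(a)u ⊗ v`. -/
def theta1 : P ⊗[k] (P ⊗[k] P) →ₗ[k] P ⊗[k] P :=
  (TensorProduct.map (LinearMap.mul' k P) LinearMap.id)
    ∘ₗ (TensorProduct.assoc k P P P).symm.toLinearMap
    ∘ₗ (rTensor (P ⊗[k] P) (HopfAlgebra.antipode (R := k) (A := P)))

variable (k P) in
/-- `a ⊗ (u ⊗ v) ↦ a S(u) ⊗ v`. -/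
def theta2 : P ⊗[k] (P ⊗[k] P) →ₗ[k] P ⊗[k] P :=
  (TensorProduct.map (LinearMap.mul' k P) LinearMap.id)
    ∘ₗ (TensorProduct.assoc k P P P).symm.toLinearMap
    ∘ₗ (lTensor P ((HopfAlgebra.antipode (R := k) (A := P)).rTensor P))

lemma theta1_tmul (a u v : P) :
    theta1 k P (a ⊗ₜ[k] (u ⊗ₜ[k] v))
      = (HopfAlgebra.antipode (R := k) (A := P) a * u) ⊗ₜ[k] v := by
  simp [theta1, LinearMap.mul'_apply]

lemma theta2_tmul (a u v : P) :
    theta2 k P (a ⊗ₜ[k] (u ⊗ₜ[k] v))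
      = (a * HopfAlgebra.antipode (R := k) (A := P) u) ⊗ₜ[k] v := by
  simp [theta2, LinearMap.mul'_apply]

lemma theta1_comul (y : P) :
    theta1 k P ((lTensor P comul) (comul y)) = (1 : P) ⊗ₜ[k] y := by
  rw [← Coalgebra.coassoc_apply]
  have h1 : theta1 k P ∘ₗ (TensorProduct.assoc k P P P).toLinearMap
      = rTensor P (LinearMap.mul' k P ∘ₗ
          (HopfAlgebra.antipode (R := k) (A := P)).rTensor P) := by
    ext u v w
    simp [theta1_tmul, LinearMap.mul'_apply]
  have h2 := LinearMap.congr_fun h1 ((comul (R := k)).rTensor P (comul y))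
  simp only [coe_comp, Function.comp_apply, LinearEquiv.coe_coe] at h2
  rw [h2, ← rTensor_comp_apply, comp_assoc, HopfAlgebra.mul_antipode_rTensor_comul]
  simp only [rTensor_comp_apply]
  rw [Coalgebra.rTensor_counit_comul]
  simp [Algebra.linearMap_apply]

lemma theta2_comul (y : P) :
    theta2 k P ((lTensor P comul) (comul y)) = (1 : P) ⊗ₜ[k] y := by
  rw [← Coalgebra.coassoc_apply]
  have h1 : theta2 k P ∘ₗ (TensorProduct.assoc k P P P).toLinearMap
      = rTensor P (LinearMap.mul' k P ∘ₗ
          (HopfAlgebra.antipode (R := k) (A := P)).lTensor P) := by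
    ext u v w
    simp [theta2_tmul, LinearMap.mul'_apply]
  have h2 := LinearMap.congr_fun h1 ((comul (R := k)).rTensor P (comul y))
  simp only [coe_comp, Function.comp_apply, LinearEquiv.coe_coe] at h2
  rw [h2, ← rTensor_comp_apply, comp_assoc, HopfAlgebra.mul_antipode_lTensor_comul]
  simp only [rTensor_comp_apply]
  rw [Coalgebra.rTensor_counit_comul]
  simp [Algebra.linearMap_apply]

lemma theta1_tmul_t (a : P) (t : P ⊗[k] P) :
    theta1 k P (a ⊗ₜ[k] t)
      = rTensor P (LinearMap.mulLeft k (HopfAlgebra.antipode (R := k) (A := P) a)) t := by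
  induction t using TensorProduct.induction_on with
  | zero => simp [tmul_zero]
  | tmul u v => simp [theta1_tmul]
  | add u v hu hv => simp only [tmul_add, map_add, hu, hv]

lemma theta2_tmul_t (a : P) (t : P ⊗[k] P) :
    theta2 k P (a ⊗ₜ[k] t)
      = rTensor P (LinearMap.mulLeft k a)
          ((HopfAlgebra.antipode (R := k) (A := P)).rTensor P t) := by
  induction t using TensorProduct.induction_on with
  | zero => simp [tmul_zero]
  | tmul u v => simp [theta2_tmul]
  | add u v hu hv => simp only [tmul_add, map_add, hu, hv]

lemma Phi_tmul (q y : P) :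
    Phi k P (q ⊗ₜ[k] y) = rTensor P (LinearMap.mulLeft k q) (comul y) :=
  canLift_tmul _ q y

lemma Psi_tmul (q y : P) :
    Psi k P (q ⊗ₜ[k] y)
      = rTensor P (LinearMap.mulLeft k q)
          ((HopfAlgebra.antipode (R := k) (A := P)).rTensor P (comul y)) := by
  rw [Psi, canLift_tmul]; rfl

lemma Phi_rTensor_mulLeft (q : P) (t : P ⊗[k] P) :
    Phi k P (rTensor P (LinearMap.mulLeft k q) t)
      = rTensor P (LinearMap.mulLeft k q) (Phi k P t) := by
  induction t using TensorProduct.induction_on with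
  | zero => simp
  | tmul a b =>
    simp only [rTensor_tmul, Phi_tmul, LinearMap.mulLeft_apply]
    rw [LinearMap.mulLeft_mul, rTensor_comp_apply]
  | add u v hu hv => simp only [map_add, hu, hv]

lemma Psi_rTensor_mulLeft (q : P) (t : P ⊗[k] P) :
    Psi k P (rTensor P (LinearMap.mulLeft k q) t)
      = rTensor P (LinearMap.mulLeft k q) (Psi k P t) := by
  induction t using TensorProduct.induction_on with
  | zero => simp
  | tmul a b =>
    simp only [rTensor_tmul, Psi_tmul, LinearMap.mulLeft_apply]
    rw [LinearMap.mulLeft_mul, rTensor_comp_apply]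
  | add u v hu hv => simp only [map_add, hu, hv]

lemma Phi_rTensor_antipode (t : P ⊗[k] P) :
    Phi k P ((HopfAlgebra.antipode (R := k) (A := P)).rTensor P t)
      = theta1 k P ((lTensor P comul) t) := by
  induction t using TensorProduct.induction_on with
  | zero => simp
  | tmul a b => rw [rTensor_tmul, Phi_tmul, lTensor_tmul, theta1_tmul_t]
  | add u v hu hv => simp only [map_add, hu, hv]

lemma Psi_eq_theta2 (t : P ⊗[k] P) :
    Psi k P t = theta2 k P ((lTensor P comul) t) := by
  induction t using TensorProduct.induction_on with
  | zero => simp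
  | tmul a b => rw [Psi_tmul, lTensor_tmul, theta2_tmul_t]
  | add u v hu hv => simp only [map_add, hu, hv]

lemma Phi_Psi (t : P ⊗[k] P) : Phi k P (Psi k P t) = t := by
  induction t using TensorProduct.induction_on with
  | zero => simp
  | tmul q y =>
    rw [Psi_tmul, Phi_rTensor_mulLeft, Phi_rTensor_antipode, theta1_comul]
    simp
  | add u v hu hv => simp only [map_add, hu, hv]

lemma Psi_Phi (t : P ⊗[k] P) : Psi k P (Phi k P t) = t := by
  induction t using TensorProduct.induction_on with
  | zero => simp
  | tmul q y =>
    rw [Phi_tmul, Psi_rTensor_mulLeft, Psi_eq_theta2, theta2_comul]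
    simp
  | add u v hu hv => simp only [map_add, hu, hv]

section Pi

lemma flat_ker {M N : Type*} [AddCommGroup M] [AddCommGroup N] [Module k M] [Module k N]
    (f : M →ₗ[k] N) :
    ker (lTensor P f) = range (lTensor P (ker f).subtype) :=
  (Module.Flat.lTensor_exact P (LinearMap.exact_subtype_ker_map f)).linearMap_ker_eq

lemma exists_repr {M : Type*} [AddCommGroup M] [Module k M] (f : P →ₗ[k] M) (z : P ⊗[k] P)
    (hz : lTensor P f z = 0) :
    ∃ s : Finset (P × ↥(ker f)), z = ∑ x ∈ s, x.1 ⊗ₜ[k] (x.2 : P) := by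
  have : z ∈ range (lTensor P (ker f).subtype) := by
    rw [← flat_ker]; exact hz
  obtain ⟨t, rfl⟩ := this
  obtain ⟨s, hs⟩ := TensorProduct.exists_finset t
  refine ⟨s, ?_⟩
  rw [hs, map_sum]
  simp

lemma smul_eq_rTensor (b : P) (t : P ⊗[k] C) :
    b • t = rTensor C (LinearMap.mulLeft k b) t := by
  induction t using TensorProduct.induction_on with
  | zero => simp
  | tmul a c => simp [smul_tmul', smul_eq_mul]
  | add u v hu hv => simp [smul_add, hu, hv]

lemma rTensor_mulLeft_mul (a : P) (t : P ⊗[k] P) :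
    rTensor P (LinearMap.mulLeft k a) t = (a ⊗ₜ[k] (1 : P)) * t := by
  induction t using TensorProduct.induction_on with
  | zero => simp
  | tmul m n => simp [Algebra.TensorProduct.tmul_mul_tmul]
  | add u v hu hv => simp [mul_add, hu, hv]

lemma lTensor_mulLeft_mul (b : P) (t : P ⊗[k] P) :
    lTensor P (LinearMap.mulLeft k b) t = ((1 : P) ⊗ₜ[k] b) * t := by
  induction t using TensorProduct.induction_on with
  | zero => simp
  | tmul m n => simp [Algebra.TensorProduct.tmul_mul_tmul]
  | add u v hu hv => simp [mul_add, hu, hv]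

lemma theta1_tmul_mul (a : P) (t : P ⊗[k] P) :
    theta1 k P (a ⊗ₜ[k] t)
      = ((HopfAlgebra.antipode (R := k) (A := P) a) ⊗ₜ[k] (1 : P)) * t := by
  rw [theta1_tmul_t, rTensor_mulLeft_mul]

lemma one_mem_coinv (δ : P →ₗ[k] P ⊗[k] C) : (1 : P) ∈ coinv δ := by
  intro p; rw [one_mul, one_smul]

lemma sub_counit_mem_coinv {δ : P →ₗ[k] P ⊗[k] C} {b : P} (hb : b ∈ coinv δ) :
    b - (Coalgebra.counit (R := k) b) • (1 : P) ∈ coinv δ := by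
  intro p
  have h1 : (b - (Coalgebra.counit (R := k) b) • (1 : P)) * p
      = b * p - (Coalgebra.counit (R := k) b) • p := by
    rw [sub_mul, smul_mul_assoc, one_mul]
  have h2 : ∀ t : P ⊗[k] C, (b - (Coalgebra.counit (R := k) b) • (1 : P)) • t
      = b • t - (Coalgebra.counit (R := k) b) • t := by
    intro t
    induction t using TensorProduct.induction_on with
    | zero => simp
    | tmul m n =>
      rw [smul_tmul', smul_tmul', smul_eq_mul, smul_eq_mul, sub_mul, smul_mul_assoc,
        one_mul, sub_tmul, smul_tmul']
    | add u v hu hv => simp only [smul_add, hu, hv]; abel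
  rw [h1, map_sub, map_smul, hb p, h2]

variable (π : P →ₗ[k] C)

/-- The induced coaction. -/
def delta : P →ₗ[k] P ⊗[k] C := (lTensor P π) ∘ₗ (Coalgebra.comul : P →ₗ[k] P ⊗[k] P)

lemma delta_apply (y : P) : delta π y = lTensor P π (comul y) := rfl

lemma coinv_delta_apply {b : P} (hb : b ∈ coinv (delta π)) :
    delta π b = b ⊗ₜ[k] π 1 := by
  have := hb 1
  rw [mul_one] at this
  rw [this, delta_apply, Bialgebra.comul_one, Algebra.TensorProduct.one_def,
    lTensor_tmul, smul_tmul', smul_eq_mul, mul_one]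

lemma lTensor_pi_tmul_ker_mul (hideal : ∀ x ∈ LinearMap.ker π, ∀ p : P, x * p ∈ LinearMap.ker π)
    (u x : P) (hx : x ∈ ker π) (t : P ⊗[k] P) :
    lTensor P π ((u ⊗ₜ[k] x) * t) = 0 := by
  induction t using TensorProduct.induction_on with
  | zero => simp
  | tmul m n =>
    rw [Algebra.TensorProduct.tmul_mul_tmul, lTensor_tmul]
    have : π (x * n) = 0 := hideal x hx n
    rw [this, tmul_zero]
  | add u' v hu hv => rw [mul_add, map_add, hu, hv, add_zero]

lemma mem_coinv_of_delta_eq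
    (hideal : ∀ x ∈ LinearMap.ker π, ∀ p : P, x * p ∈ LinearMap.ker π)
    {b : P} (hb : delta π b = b ⊗ₜ[k] π 1) : b ∈ coinv (delta π) := by
  intro p
  have hκ : lTensor P π (comul b - b ⊗ₜ[k] (1 : P)) = 0 := by
    rw [map_sub, ← delta_apply, hb, lTensor_tmul, sub_self]
  obtain ⟨s, hs⟩ := exists_repr π _ hκ
  have hcomul : (comul b : P ⊗[k] P) = b ⊗ₜ[k] (1 : P) + ∑ x ∈ s, x.1 ⊗ₜ[k] (x.2 : P) := by
    rw [← hs]; abel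
  rw [delta_apply, Bialgebra.comul_mul, hcomul, add_mul, map_add, Finset.sum_mul, map_sum]
  have h1 : lTensor P π ((b ⊗ₜ[k] (1 : P)) * comul p) = b • delta π p := by
    rw [← rTensor_mulLeft_mul, smul_eq_rTensor, delta_apply]
    induction (comul (R := k) p) using TensorProduct.induction_on with
    | zero => simp
    | tmul m n => simp
    | add u v hu hv => simp only [map_add, hu, hv]
  have h2 : ∀ x ∈ s, lTensor P π ((x.1 ⊗ₜ[k] (x.2 : P)) * comul p) = 0 := fun x _ =>
    lTensor_pi_tmul_ker_mul π hideal x.1 (x.2 : P) x.2.2 _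
  rw [h1, Finset.sum_congr rfl h2, Finset.sum_const_zero, add_zero]

end Pi

section Pi2
variable (π : P →ₗ[k] C)

/-- `p ↦ p ⊗ π 1`. -/
def tau : P →ₗ[k] P ⊗[k] C := (TensorProduct.mk k P C).flip (π 1)

lemma tau_apply (p : P) : tau π p = p ⊗ₜ[k] π 1 := rfl

lemma lTensor_sub_apply {M : Type*} [AddCommGroup M] [Module k M]
    (f g : P →ₗ[k] M) (t : P ⊗[k] P) :
    lTensor P (f - g) t = lTensor P f t - lTensor P g t := by
  induction t using TensorProduct.induction_on with
  | zero => simp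
  | tmul m n => simp [tmul_sub]
  | add u v hu hv => simp only [map_add, hu, hv]; abel

/-- If `b` is a coaction invariant then `comul b` has a representation whose right
legs are all coaction invariants. -/
lemma comul_coinv (hideal : ∀ x ∈ LinearMap.ker π, ∀ p : P, x * p ∈ LinearMap.ker π)
    {b : P} (hb : b ∈ coinv (delta π)) :
    ∃ s : Finset (P × P), ((comul b : P ⊗[k] P) = ∑ x ∈ s, x.1 ⊗ₜ[k] x.2)
      ∧ ∀ x ∈ s, x.2 ∈ coinv (delta π) := by
  classical
  set d : P →ₗ[k] P ⊗[k] C := delta π - tau π with hd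
  have hker : ∀ y : P, y ∈ ker d ↔ delta π y = y ⊗ₜ[k] π 1 := by
    intro y
    rw [mem_ker, hd, LinearMap.sub_apply, sub_eq_zero, tau_apply]
  -- compute `lTensor P (delta π) (comul b)`
  have hnat1 : lTensor P (lTensor P π) ∘ₗ (TensorProduct.assoc k P P P).toLinearMap
      = (TensorProduct.assoc k P P C).toLinearMap ∘ₗ lTensor (P ⊗[k] P) π := by
    ext u v w; simp
  have hnat2 : ∀ t : P ⊗[k] P,
      lTensor (P ⊗[k] P) π (rTensor P (comul (R := k)) t)
        = rTensor C (comul (R := k)) (lTensor P π t) := by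
    intro t
    induction t using TensorProduct.induction_on with
    | zero => simp
    | tmul m n => simp
    | add u v hu hv => simp only [map_add, hu, hv]
  have hτ : ∀ e : P ⊗[k] P, lTensor P (tau π) e
      = (TensorProduct.assoc k P P C) (e ⊗ₜ[k] π 1) := by
    intro e
    induction e using TensorProduct.induction_on with
    | zero => simp
    | tmul m n => simp [tau_apply]
    | add u v hu hv => rw [map_add, add_tmul, map_add, hu, hv]
  have hδ : lTensor P (delta π) (comul b)
      = (TensorProduct.assoc k P P C) ((comul b : P ⊗[k] P) ⊗ₜ[k] π 1) := by
    have e1 : lTensor P (delta π) (comul b)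
        = lTensor P (lTensor P π) ((comul (R := k)).lTensor P (comul b)) := by
      rw [delta, lTensor_comp, coe_comp, Function.comp_apply]
    rw [e1, ← Coalgebra.coassoc_apply]
    have e2 := LinearMap.congr_fun hnat1 ((comul (R := k)).rTensor P (comul b))
    simp only [coe_comp, Function.comp_apply, LinearEquiv.coe_coe] at e2
    rw [e2, hnat2, ← delta_apply, coinv_delta_apply π hb]
    simp
  have hzero : lTensor P d (comul b) = 0 := by
    rw [hd, lTensor_sub_apply, hδ, hτ, sub_self]
  obtain ⟨s, hs⟩ := exists_repr d _ hzero
  refine ⟨s.image (fun x => (x.1, (x.2 : P))), ?_, ?_⟩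
  · rw [Finset.sum_image ?inj]
    · exact hs
    · intro x _ y _ hxy
      simp only [Prod.mk.injEq] at hxy
      exact Prod.ext hxy.1 (Subtype.ext hxy.2)
  · intro x hx
    simp only [Finset.mem_image] at hx
    obtain ⟨y, _, rfl⟩ := hx
    exact mem_coinv_of_delta_eq π hideal ((hker _).mp y.2.2)

lemma canLift_pi : canLift (delta π) = (lTensor P π) ∘ₗ Phi k P := by
  ext q y
  simp only [AlgebraTensorModule.curry_apply, curry_apply, coe_restrictScalars, coe_comp,
    Function.comp_apply]
  rw [canLift_tmul, Phi_tmul, delta_apply]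
  induction (comul (R := k) y) using TensorProduct.induction_on with
  | zero => simp
  | tmul m n => simp
  | add u v hu hv => simp only [map_add, hu, hv]

lemma galRel_le_ker (δ : P →ₗ[k] P ⊗[k] C) : galRel δ ≤ ker (canLift δ) := by
  rw [galRel, Submodule.span_le]
  rintro x ⟨p, b, p', hb, rfl⟩
  simp only [SetLike.mem_coe, mem_ker, map_sub, canLift_tmul]
  rw [hb p', smul_eq_rTensor, LinearMap.mulLeft_mul, rTensor_comp_apply, ← rTensor_comp_apply,
    ← LinearMap.mulLeft_mul, sub_self]

end Pi2

section Key
variable (π : P →ₗ[k] C)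

local notation "S" => HopfAlgebra.antipode (R := k) (A := P)

lemma key_mem (hideal : ∀ x ∈ LinearMap.ker π, ∀ p : P, x * p ∈ LinearMap.ker π)
    {b : P} (hb : b ∈ coinv (delta π)) (hε : Coalgebra.counit (R := k) b = 0) (q p : P) :
    q ⊗ₜ[k] (b * p) ∈ Submodule.map (Phi k P) (galRel (delta π)) := by
  classical
  obtain ⟨s, hsum, hmem⟩ := comul_coinv π hideal hb
  set r := ℛ k p with hr
  -- the element of `galRel` we will use
  set g : P ⊗[k] P := ∑ i ∈ r.index, ∑ x ∈ s,
      (((q * S (r.left i) * S x.1) * x.2) ⊗ₜ[k] r.right i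
        - (q * S (r.left i) * S x.1) ⊗ₜ[k] (x.2 * r.right i)) with hg
  have hgmem : g ∈ galRel (delta π) := by
    refine Submodule.sum_mem _ fun i _ => Submodule.sum_mem _ fun x hx => ?_
    exact Submodule.subset_span ⟨q * S (r.left i) * S x.1, x.2, r.right i, hmem x hx, rfl⟩
  -- `∑ S x.1 * x.2 = ε(b) = 0`
  have hanti : (∑ x ∈ s, S x.1 * x.2) = 0 := by
    have h := HopfAlgebra.mul_antipode_rTensor_comul_apply (R := k) b
    rw [hsum, map_sum] at h
    simp only [rTensor_tmul, LinearMap.mul'_apply, map_sum] at h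
    rw [h, hε, map_zero]
  -- `∑ (S x.1 ⊗ 1) * Δ x.2 = 1 ⊗ b`
  have hthb : (∑ x ∈ s, ((S x.1) ⊗ₜ[k] (1 : P)) * (comul x.2 : P ⊗[k] P))
      = (1 : P) ⊗ₜ[k] b := by
    have : ∀ x ∈ s, ((S x.1) ⊗ₜ[k] (1 : P)) * (comul x.2 : P ⊗[k] P)
        = theta1 k P (x.1 ⊗ₜ[k] (comul x.2 : P ⊗[k] P)) := fun x _ =>
      (theta1_tmul_mul x.1 _).symm
    rw [Finset.sum_congr rfl this]
    have : (∑ x ∈ s, theta1 k P (x.1 ⊗ₜ[k] (comul x.2 : P ⊗[k] P)))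
        = theta1 k P ((lTensor P (comul (R := k))) (∑ x ∈ s, x.1 ⊗ₜ[k] x.2)) := by
      rw [map_sum, map_sum]; simp
    rw [this, ← hsum, theta1_comul]
  -- `∑ (S (left i) ⊗ 1) * Δ (right i) = 1 ⊗ p`
  have hthp : (∑ i ∈ r.index, ((S (r.left i)) ⊗ₜ[k] (1 : P)) * (comul (r.right i) : P ⊗[k] P))
      = (1 : P) ⊗ₜ[k] p := by
    have : ∀ i ∈ r.index, ((S (r.left i)) ⊗ₜ[k] (1 : P)) * (comul (r.right i) : P ⊗[k] P)
        = theta1 k P ((r.left i) ⊗ₜ[k] (comul (r.right i) : P ⊗[k] P)) := fun i _ =>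
      (theta1_tmul_mul _ _).symm
    rw [Finset.sum_congr rfl this]
    have : (∑ i ∈ r.index, theta1 k P ((r.left i) ⊗ₜ[k] (comul (r.right i) : P ⊗[k] P)))
        = theta1 k P ((lTensor P (comul (R := k)))
            (∑ i ∈ r.index, (r.left i) ⊗ₜ[k] (r.right i))) := by
      rw [map_sum, map_sum]; simp
    rw [this, r.eq, theta1_comul]
  -- compute `Φ g`
  have hPhig : Phi k P g = - (q ⊗ₜ[k] (b * p)) := by
    rw [hg, map_sum]
    have hterm : ∀ i ∈ r.index,
        Phi k P (∑ x ∈ s, (((q * S (r.left i) * S x.1) * x.2) ⊗ₜ[k] r.right i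
          - (q * S (r.left i) * S x.1) ⊗ₜ[k] (x.2 * r.right i)))
        = - (((q * S (r.left i)) ⊗ₜ[k] (1 : P))
              * (((1 : P) ⊗ₜ[k] b) * (comul (r.right i) : P ⊗[k] P))) := by
      intro i _
      rw [map_sum]
      have hA : ∀ x ∈ s,
          Phi k P ((((q * S (r.left i) * S x.1) * x.2) ⊗ₜ[k] r.right i
            - (q * S (r.left i) * S x.1) ⊗ₜ[k] (x.2 * r.right i)))
          = ((q * S (r.left i)) ⊗ₜ[k] (1 : P)) * (((S x.1 * x.2) ⊗ₜ[k] (1 : P))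
                * (comul (r.right i) : P ⊗[k] P))
            - ((q * S (r.left i)) ⊗ₜ[k] (1 : P)) * ((((S x.1) ⊗ₜ[k] (1:P))
                * (comul x.2 : P ⊗[k] P)) * (comul (r.right i) : P ⊗[k] P)) := by
        intro x _
        rw [map_sub, Phi_tmul, Phi_tmul, rTensor_mulLeft_mul, rTensor_mulLeft_mul,
          Bialgebra.comul_mul]
        congr 1
        · simp only [← mul_assoc]
          congr 1
          simp [Algebra.TensorProduct.tmul_mul_tmul, mul_assoc]
        · simp only [← mul_assoc]
          congr 2
          simp [Algebra.TensorProduct.tmul_mul_tmul, mul_assoc]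
      rw [Finset.sum_congr rfl hA, Finset.sum_sub_distrib]
      rw [← Finset.mul_sum, ← Finset.mul_sum]
      have e1 : (∑ x ∈ s, ((S x.1 * x.2) ⊗ₜ[k] (1 : P)) * (comul (r.right i) : P ⊗[k] P))
          = ((∑ x ∈ s, S x.1 * x.2) ⊗ₜ[k] (1 : P)) * (comul (r.right i) : P ⊗[k] P) := by
        rw [← Finset.sum_mul, sum_tmul]
      have e2 : (∑ x ∈ s, (((S x.1) ⊗ₜ[k] (1:P)) * (comul x.2 : P ⊗[k] P))
              * (comul (r.right i) : P ⊗[k] P))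
          = ((1 : P) ⊗ₜ[k] b) * (comul (r.right i) : P ⊗[k] P) := by
        rw [← Finset.sum_mul, hthb]
      rw [e1, e2, hanti, zero_tmul, zero_mul, mul_zero, zero_sub]
    rw [Finset.sum_congr rfl hterm]
    have hstep : ∀ i ∈ r.index,
        - (((q * S (r.left i)) ⊗ₜ[k] (1 : P))
            * (((1 : P) ⊗ₜ[k] b) * (comul (r.right i) : P ⊗[k] P)))
        = - (((1 : P) ⊗ₜ[k] b) * ((q ⊗ₜ[k] (1 : P))
            * (((S (r.left i)) ⊗ₜ[k] (1 : P)) * (comul (r.right i) : P ⊗[k] P)))) := by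
      intro i _
      congr 1
      calc ((q * S (r.left i)) ⊗ₜ[k] (1 : P))
            * (((1 : P) ⊗ₜ[k] b) * (comul (r.right i) : P ⊗[k] P))
          = (((q * S (r.left i)) ⊗ₜ[k] (1 : P)) * ((1 : P) ⊗ₜ[k] b))
              * (comul (r.right i) : P ⊗[k] P) := (mul_assoc _ _ _).symm
        _ = ((((1 : P) ⊗ₜ[k] b) * (q ⊗ₜ[k] (1 : P))) * ((S (r.left i)) ⊗ₜ[k] (1 : P)))
              * (comul (r.right i) : P ⊗[k] P) := by
            simp [Algebra.TensorProduct.tmul_mul_tmul, mul_assoc]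
        _ = ((1 : P) ⊗ₜ[k] b) * ((q ⊗ₜ[k] (1 : P))
              * (((S (r.left i)) ⊗ₜ[k] (1 : P)) * (comul (r.right i) : P ⊗[k] P))) := by
            rw [mul_assoc, mul_assoc]
    rw [Finset.sum_congr rfl hstep, Finset.sum_neg_distrib, ← Finset.mul_sum,
      ← Finset.mul_sum, hthp]
    congr 1
    simp [Algebra.TensorProduct.tmul_mul_tmul]
  exact ⟨-g, Submodule.neg_mem _ hgmem, by rw [map_neg, hPhig, neg_neg]⟩

end Key

section Extract
variable (π : P →ₗ[k] C)

variable (k P C) in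
/-- apply the counit to the first tensor factor. -/
def Fc : P ⊗[k] C →ₗ[k] C :=
  (TensorProduct.lid k C).toLinearMap ∘ₗ rTensor C (Coalgebra.counit : P →ₗ[k] k)

lemma Fc_tmul (a : P) (c : C) : Fc k P C (a ⊗ₜ[k] c) = Coalgebra.counit (R := k) a • c := by
  simp [Fc]

lemma Fc_delta (y : P) : Fc k P C (delta π y) = π y := by
  have h : ∀ t : P ⊗[k] P, Fc k P C (lTensor P π t)
      = π ((TensorProduct.lid k P) (rTensor P (Coalgebra.counit : P →ₗ[k] k) t)) := by
    intro t
    induction t using TensorProduct.induction_on with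
    | zero => simp
    | tmul m n => simp [Fc_tmul]
    | add u v hu hv => simp only [map_add, hu, hv]
  rw [delta_apply, h, Coalgebra.rTensor_counit_comul]
  simp

lemma Fc_smul (b : P) (t : P ⊗[k] C) :
    Fc k P C (b • t) = Coalgebra.counit (R := k) b • Fc k P C t := by
  induction t using TensorProduct.induction_on with
  | zero => simp
  | tmul m n =>
    rw [smul_tmul', smul_eq_mul, Fc_tmul, Fc_tmul, Bialgebra.counit_mul, mul_smul]
  | add u v hu hv => simp only [smul_add, map_add, hu, hv, smul_add]

lemma pi_coinv_mul {b : P} (hb : b ∈ coinv (delta π))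
    (hε : Coalgebra.counit (R := k) b = 0) (p : P) : π (b * p) = 0 := by
  rw [← Fc_delta π, hb p, Fc_smul, hε, zero_smul]

lemma Fc_rTensor_mulLeft (a : P) (t : P ⊗[k] C) :
    Fc k P C (rTensor C (LinearMap.mulLeft k a) t)
      = Coalgebra.counit (R := k) a • Fc k P C t := by
  rw [← smul_eq_rTensor, Fc_smul]

lemma Fc_Phi (t : P ⊗[k] P) : Fc k P P (Phi k P t) = Fc k P P t := by
  induction t using TensorProduct.induction_on with
  | zero => simp
  | tmul a y =>
    rw [Phi_tmul, Fc_rTensor_mulLeft, Fc_tmul]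
    congr 1
    have h : Fc k P P (comul y) = (TensorProduct.lid k P)
        ((Coalgebra.counit (R := k)).rTensor P (comul y)) := rfl
    rw [h, Coalgebra.rTensor_counit_comul]
    simp
  | add u v hu hv => simp only [map_add, hu, hv]

end Extract


theorem homogeneous_galois_iff_I_eq_BplusP
    (π : P →ₗ[k] C) (hsurj : Function.Surjective π)
    -- π is a coalgebra map (so that C ≅ P/I as coalgebras, I = Ker π a coideal):
    (hπΔ : (Coalgebra.comul : C →ₗ[k] C ⊗[k] C) ∘ₗ π
            = (TensorProduct.map π π) ∘ₗ (Coalgebra.comul : P →ₗ[k] P ⊗[k] P))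
    (hπε : (Coalgebra.counit : C →ₗ[k] k) ∘ₗ π = (Coalgebra.counit : P →ₗ[k] k))
    -- I = Ker π is a right ideal of P:
    (hideal : ∀ x ∈ LinearMap.ker π, ∀ p : P, x * p ∈ LinearMap.ker π) :
    -- the induced coaction δ = (id ⊗ π) ∘ Δ:
    letI δ : P →ₗ[k] P ⊗[k] C :=
      (lTensor P π) ∘ₗ (Coalgebra.comul : P →ₗ[k] P ⊗[k] P)
    (IsCGalois δ ↔
      LinearMap.ker π
        = Submodule.span k
            {x : P | ∃ b p, b ∈ coinv δ ∧ (Coalgebra.counit : P →ₗ[k] k) b = 0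
                      ∧ x = b * p}) := by
  show IsCGalois (delta π) ↔
      LinearMap.ker π
        = Submodule.span k
            {x : P | ∃ b p, b ∈ coinv (delta π) ∧ (Coalgebra.counit : P →ₗ[k] k) b = 0
                      ∧ x = b * p}
  set I' : Submodule k P := Submodule.span k
      {x : P | ∃ b p, b ∈ coinv (delta π) ∧ (Coalgebra.counit : P →ₗ[k] k) b = 0
                ∧ x = b * p} with hI'
  constructor
  · rintro ⟨-, hker⟩
    apply le_antisymm
    · -- ker π ≤ I'
      intro x hx
      rw [mem_ker] at hx
      have h1 : Psi k P ((1:P) ⊗ₜ[k] x) ∈ ker (canLift (delta π)) := by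
        rw [mem_ker, canLift_pi, coe_comp, Function.comp_apply, Phi_Psi, lTensor_tmul, hx,
          tmul_zero]
      rw [hker] at h1
      have h2 : x = Fc k P P (Psi k P ((1:P) ⊗ₜ[k] x)) := by
        rw [← Fc_Phi (Psi k P ((1:P) ⊗ₜ[k] x)), Phi_Psi, Fc_tmul, Bialgebra.counit_one,
          one_smul]
      have hle : galRel (delta π) ≤ I'.comap (Fc k P P) := by
        rw [galRel, Submodule.span_le]
        rintro _ ⟨p', b, p'', hb, rfl⟩
        have hb' : b - (Coalgebra.counit (R := k) b) • (1:P) ∈ coinv (delta π) :=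
          sub_counit_mem_coinv hb
        have hε' : Coalgebra.counit (R := k) (b - (Coalgebra.counit (R := k) b) • (1:P)) = 0 := by
          rw [map_sub, map_smul, Bialgebra.counit_one, smul_eq_mul, mul_one, sub_self]
        have e1 : Fc k P P ((p' * b) ⊗ₜ[k] p'' - p' ⊗ₜ[k] (b * p''))
            = (-(Coalgebra.counit (R := k) p')) •
                ((b - (Coalgebra.counit (R := k) b) • (1:P)) * p'') := by
          rw [map_sub, Fc_tmul, Fc_tmul, Bialgebra.counit_mul, sub_mul, smul_mul_assoc,
            one_mul, mul_smul]
          module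
        rw [SetLike.mem_coe, Submodule.mem_comap, e1]
        exact Submodule.smul_mem _ _ (Submodule.subset_span ⟨_, p'', hb', hε', rfl⟩)
      rw [h2]
      exact hle h1
    · rw [hI', Submodule.span_le]
      rintro _ ⟨b, p, hb, hε, rfl⟩
      rw [SetLike.mem_coe, mem_ker]
      exact pi_coinv_mul π hb hε p
  · intro hI
    constructor
    · rw [canLift_pi, coe_comp]
      exact (LinearMap.lTensor_surjective P hsurj).comp (fun t => ⟨Psi k P t, Phi_Psi t⟩)
    · apply le_antisymm _ (galRel_le_ker _)
      intro x hx
      rw [mem_ker, canLift_pi, coe_comp, Function.comp_apply] at hx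
      obtain ⟨s, hs⟩ := exists_repr π _ hx
      have hElem : ∀ (a y : P), y ∈ ker π →
          a ⊗ₜ[k] y ∈ Submodule.map (Phi k P) (galRel (delta π)) := by
        intro a y hy
        rw [hI] at hy
        have hle : I' ≤ (Submodule.map (Phi k P) (galRel (delta π))).comap
            ((TensorProduct.mk k P P) a) := by
          rw [hI', Submodule.span_le]
          rintro _ ⟨b, p, hb, hε, rfl⟩
          exact key_mem π hideal hb hε a p
        exact hle hy
      have h2 : Phi k P x ∈ Submodule.map (Phi k P) (galRel (delta π)) := by
        rw [hs]
        exact Submodule.sum_mem _ fun y _ => hElem y.1 (y.2 : P) y.2.2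
      obtain ⟨g, hg, hgx⟩ := h2
      have hgeq : g = x := by
        have := congrArg (Psi k P) hgx
        rwa [Psi_Phi, Psi_Phi] at this
      rwa [← hgeq]

end CGal
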